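/- For integers s ≥ 1, t ≥ 2, p ≥ 1, and n_t ≥ n_{t−1} ≥ ⋯ ≥ n_1 ≥ 1 with n_{t−1} ≥ p, ∑_{i=1}^t n_i = n − s, and n_t < n − s − t − p + 2, the adjacency spectral radius satisfies ρ(K_s ∨ (K_{n_t} ∪ K_{n_{t−1}} ∪ ⋯ ∪ K_{n_1})) < ρ(K_s ∨ (K_{n−s−t−p+2} ∪ K_p ∪ (t−2)K₁)). -/

import Mathlib

/-- The adjacency matrix of a finite simple graph is Hermitian over ℝ. -/
theorem adjMatrix_isHermitian {V : Type*} [Fintype V] [DecidableEq V] (G : SimpleGraph V)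
    [DecidableRel G.Adj] : (G.adjMatrix ℝ).IsHermitian := by
  rw [Matrix.IsHermitian, Matrix.conjTranspose_eq_transpose_of_trivial]
  exact G.isSymm_adjMatrix

/-- The adjacency spectral radius of a finite simple graph: the largest eigenvalue of its
adjacency matrix. -/
noncomputable def specRad {V : Type*} [Fintype V] [DecidableEq V] (G : SimpleGraph V) : ℝ := by
  classical exact ⨆ i, (adjMatrix_isHermitian G).eigenvalues i

/-- The graph K_s ∨ (K_{n 0} ∪ K_{n 1} ∪ ⋯ ∪ K_{n (t−1)}): the join of a complete graph on
s vertices with the disjoint union of complete graphs of orders n i. -/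
def joinCliques (s t : ℕ) (n : Fin t → ℕ) :
    SimpleGraph (Fin s ⊕ Σ i : Fin t, Fin (n i)) where
  Adj u v := u ≠ v ∧ (u.isLeft ∨ v.isLeft ∨
    ∃ a b : Σ i : Fin t, Fin (n i), a.1 = b.1 ∧ u = Sum.inr a ∧ v = Sum.inr b)
  symm := by
    constructor
    rintro u v ⟨h1, h2⟩
    refine ⟨h1.symm, ?_⟩
    rcases h2 with h | h | ⟨a, b, hab, rfl, rfl⟩
    · exact Or.inr (Or.inl h)
    · exact Or.inl h
    · exact Or.inr (Or.inr ⟨b, a, hab.symm, rfl, rfl⟩)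
  loopless := ⟨fun u h => h.1 rfl⟩


open Matrix Sum



variable {V : Type*} [Fintype V] [DecidableEq V]

lemma rayleigh_le {A : Matrix V V ℝ} (hA : A.IsHermitian) (x : V → ℝ) :
    x ⬝ᵥ (A *ᵥ x) ≤ (⨆ i, hA.eigenvalues i) * (x ⬝ᵥ x) := by
  classical
  cases isEmpty_or_nonempty V
  · simp [dotProduct]
  set f : V → V → ℝ := fun j => hA.eigenvectorBasis j with hf
  have hme : ∀ j, A *ᵥ f j = hA.eigenvalues j • f j := fun j => hA.mulVec_eigenvectorBasis j
  have hpar : ∀ y z : V → ℝ, ∑ j, (f j ⬝ᵥ y) * (f j ⬝ᵥ z) = y ⬝ᵥ z := by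
    intro y z
    have h := OrthonormalBasis.sum_inner_mul_inner hA.eigenvectorBasis
      (WithLp.toLp 2 y : EuclideanSpace ℝ V) (WithLp.toLp 2 z : EuclideanSpace ℝ V)
    simp only [PiLp.inner_apply, RCLike.inner_apply, conj_trivial, PiLp.toLp_apply] at h
    simp only [dotProduct, hf]
    rw [Finset.sum_congr rfl (fun i _ => mul_comm (y i) (z i)), ← h]
    exact Finset.sum_congr rfl fun j _ => by
      congr 1
      exact Finset.sum_congr rfl fun v _ => mul_comm _ _
  have hsup : ∀ i, hA.eigenvalues i ≤ ⨆ j, hA.eigenvalues j := fun i =>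
    le_ciSup (Set.Finite.bddAbove (Set.finite_range _)) i
  have hdot : ∀ j, f j ⬝ᵥ (A *ᵥ x) = hA.eigenvalues j * (f j ⬝ᵥ x) := by
    intro j
    rw [dotProduct_mulVec, ← mulVec_transpose]
    have ht : Aᵀ = A := by
      have h2 := hA
      rwa [Matrix.IsHermitian, Matrix.conjTranspose_eq_transpose_of_trivial] at h2
    rw [ht, hme j, smul_dotProduct, smul_eq_mul]
  calc x ⬝ᵥ (A *ᵥ x) = ∑ j, hA.eigenvalues j * ((f j ⬝ᵥ x) * (f j ⬝ᵥ x)) := by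
        rw [← hpar x (A *ᵥ x)]
        exact Finset.sum_congr rfl fun j _ => by rw [hdot]; ring
    _ ≤ ∑ j, (⨆ i, hA.eigenvalues i) * ((f j ⬝ᵥ x) * (f j ⬝ᵥ x)) := by
        apply Finset.sum_le_sum
        intro j _
        exact mul_le_mul_of_nonneg_right (hsup j) (mul_self_nonneg _)
    _ = (⨆ i, hA.eigenvalues i) * (x ⬝ᵥ x) := by rw [← Finset.mul_sum, hpar]

lemma exists_eigvec {A : Matrix V V ℝ} (hA : A.IsHermitian) [Nonempty V] :
    ∃ x : V → ℝ, x ≠ 0 ∧ A *ᵥ x = (⨆ i, hA.eigenvalues i) • x := by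
  classical
  obtain ⟨j, hj⟩ := Finite.exists_max hA.eigenvalues
  have hsup : (⨆ i, hA.eigenvalues i) = hA.eigenvalues j := by
    apply le_antisymm (ciSup_le hj) (le_ciSup (Set.Finite.bddAbove (Set.finite_range _)) j)
  refine ⟨hA.eigenvectorBasis j, ?_, by rw [hsup]; exact hA.mulVec_eigenvectorBasis j⟩
  intro h0
  have := hA.eigenvectorBasis.orthonormal.1 j
  rw [show (hA.eigenvectorBasis j : EuclideanSpace ℝ V) = 0 from (WithLp.ofLp_eq_zero 2).1 h0] at this
  simp at this

lemma specRad_eq {V : Type*} [Fintype V] [DecidableEq V] (G : SimpleGraph V)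
    [inst : DecidableRel G.Adj] :
    specRad G = ⨆ i, (adjMatrix_isHermitian G).eigenvalues i := by
  unfold specRad
  congr!

section
variable {s t : ℕ} {nf : Fin t → ℕ}

lemma jc_adj_inl_left (k : Fin s) (v) : (joinCliques s t nf).Adj (inl k) v ↔ inl k ≠ v := by
  constructor
  · exact fun h => h.1
  · exact fun h => ⟨h, Or.inl rfl⟩

lemma jc_adj_inr_inl (a : Σ i : Fin t, Fin (nf i)) (k : Fin s) :
    (joinCliques s t nf).Adj (inr a) (inl k) := ⟨by simp, Or.inr (Or.inl rfl)⟩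

lemma jc_adj_inr_inr (a b : Σ i : Fin t, Fin (nf i)) :
    (joinCliques s t nf).Adj (inr a) (inr b) ↔ a ≠ b ∧ a.1 = b.1 := by
  constructor
  · rintro ⟨h1, h2⟩
    refine ⟨fun h => h1 (by rw [h]), ?_⟩
    rcases h2 with h | h | ⟨a', b', hab, ha, hb⟩
    · simp at h
    · simp at h
    · rw [inr.injEq] at ha hb; rw [ha, hb]; exact hab
  · rintro ⟨h1, h2⟩
    exact ⟨by simp [h1], Or.inr (Or.inr ⟨a, b, h2, rfl, rfl⟩)⟩

variable [DecidableRel (joinCliques s t nf).Adj]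

noncomputable def Ssum (x : Fin s ⊕ (Σ i : Fin t, Fin (nf i)) → ℝ) : ℝ := ∑ k, x (inl k)
noncomputable def Tsum (i : Fin t) (x : Fin s ⊕ (Σ i : Fin t, Fin (nf i)) → ℝ) : ℝ :=
  ∑ j, x (inr ⟨i, j⟩)

lemma sum_univ_eq (x : Fin s ⊕ (Σ i : Fin t, Fin (nf i)) → ℝ) :
    ∑ u, x u = Ssum x + ∑ i, Tsum i x := by
  rw [Fintype.sum_sum_type]
  congr 1
  rw [← Finset.univ_sigma_univ, Finset.sum_sigma]
  rfl

lemma mulVec_inl (x : Fin s ⊕ (Σ i : Fin t, Fin (nf i)) → ℝ) (k : Fin s) :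
    ((joinCliques s t nf).adjMatrix ℝ *ᵥ x) (inl k) = (∑ u, x u) - x (inl k) := by
  rw [SimpleGraph.adjMatrix_mulVec_apply]
  have : (joinCliques s t nf).neighborFinset (inl k) = Finset.univ.erase (inl k) := by
    ext v
    simp [SimpleGraph.mem_neighborFinset, jc_adj_inl_left, Finset.mem_erase, ne_comm, eq_comm]
  rw [this, Finset.sum_erase_eq_sub (Finset.mem_univ _)]

lemma mulVec_inr (x : Fin s ⊕ (Σ i : Fin t, Fin (nf i)) → ℝ) (a : Σ i : Fin t, Fin (nf i)) :
    ((joinCliques s t nf).adjMatrix ℝ *ᵥ x) (inr a) = Ssum x + Tsum a.1 x - x (inr a) := by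
  rw [SimpleGraph.adjMatrix_mulVec_apply, SimpleGraph.neighborFinset_eq_filter,
    Finset.sum_filter, Fintype.sum_sum_type]
  have h1 : ∀ k : Fin s, (if (joinCliques s t nf).Adj (inr a) (inl k) then x (inl k) else 0)
      = x (inl k) := fun k => if_pos (jc_adj_inr_inl a k)
  have h2 : ∑ b : Σ i : Fin t, Fin (nf i),
      (if (joinCliques s t nf).Adj (inr a) (inr b) then x (inr b) else 0)
      = Tsum a.1 x - x (inr a) := by
    classical
    have : ∀ b : Σ i : Fin t, Fin (nf i),
        (if (joinCliques s t nf).Adj (inr a) (inr b) then x (inr b) else 0)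
        = if a.1 = b.1 then (if a = b then 0 else x (inr b)) else 0 := by
      intro b
      by_cases hfst : a.1 = b.1
      · by_cases heq : a = b
        · simp [hfst, heq, SimpleGraph.irrefl]
        · rw [if_pos ((jc_adj_inr_inr a b).2 ⟨heq, hfst⟩), if_pos hfst, if_neg heq]
      · rw [if_neg (fun h => hfst ((jc_adj_inr_inr a b).1 h).2), if_neg hfst]
    rw [Finset.sum_congr rfl (fun b _ => this b)]
    rw [← Finset.univ_sigma_univ, Finset.sum_sigma]
    rw [Finset.sum_eq_single a.1]
    · obtain ⟨i, j⟩ := a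
      have key : ∀ j' : Fin (nf i),
          (if (⟨i, j⟩ : Σ i : Fin t, Fin (nf i)).fst = (⟨i, j'⟩ : Σ i : Fin t, Fin (nf i)).fst
            then (if (⟨i, j⟩ : Σ i : Fin t, Fin (nf i)) = ⟨i, j'⟩ then 0 else x (inr ⟨i, j'⟩))
            else 0)
          = x (inr ⟨i, j'⟩) - (if j' = j then x (inr ⟨i, j'⟩) else 0) := by
        intro j'
        by_cases h : j' = j
        · subst h; simp
        · rw [if_pos rfl, if_neg (by simp [Sigma.mk.inj_iff]; exact fun hh => h hh.symm),
            if_neg h, sub_zero]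
      rw [Finset.sum_congr rfl (fun j' _ => key j'), Finset.sum_sub_distrib,
        Finset.sum_ite_eq' Finset.univ j (fun j' => x (inr ⟨i, j'⟩))]
      simp [Tsum]
    · intro i _ hi
      exact Finset.sum_eq_zero fun j' _ => if_neg (fun h => hi (Eq.symm h))
    · simp
  rw [Finset.sum_congr rfl (fun k _ => h1 k), h2]
  simp only [Ssum]
  ring

lemma key_equation (hs : 1 ≤ s) (ht : 1 ≤ t) (hnf : ∀ i, 1 ≤ nf i) {ρ : ℝ}
    (hρ : ∀ i, (s : ℝ) + nf i - 1 ≤ ρ)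
    (x : Fin s ⊕ (Σ i : Fin t, Fin (nf i)) → ℝ) (hx : x ≠ 0)
    (heig : (joinCliques s t nf).adjMatrix ℝ *ᵥ x = ρ • x) :
    ρ + 1 - s = s * ∑ i, (nf i : ℝ) / (ρ + 1 - nf i) := by
  classical
  have hρ1 : (0:ℝ) < ρ + 1 := by
    have h0 := hρ ⟨0, ht⟩
    have h1 := hnf ⟨0, ht⟩
    have : (1:ℝ) ≤ (nf ⟨0, ht⟩ : ℝ) := by exact_mod_cast h1
    have : (1:ℝ) ≤ (s:ℝ) := by exact_mod_cast hs
    linarith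
  have hden : ∀ i, (0:ℝ) < ρ + 1 - nf i := by
    intro i
    have := hρ i
    have : (1:ℝ) ≤ (s:ℝ) := by exact_mod_cast hs
    linarith [hρ i]
  set aa : ℝ := (∑ u, x u) / (ρ + 1) with haa
  have hxl : ∀ k : Fin s, x (Sum.inl k) = aa := by
    intro k
    have h := congrFun heig (Sum.inl k)
    rw [mulVec_inl] at h
    simp only [Pi.smul_apply, smul_eq_mul] at h
    rw [haa, eq_div_iff (ne_of_gt hρ1)]
    linarith
  have hS : Ssum x = s * aa := by
    unfold Ssum
    rw [Finset.sum_congr rfl (fun k _ => hxl k), Finset.sum_const, Finset.card_univ,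
      Fintype.card_fin, nsmul_eq_mul]
  have hxr : ∀ (i : Fin t) (j : Fin (nf i)), x (Sum.inr ⟨i, j⟩) = s * aa / (ρ + 1 - nf i) := by
    intro i j
    -- first: constant on clique
    have hconst : ∀ j' : Fin (nf i), (ρ + 1) * x (Sum.inr ⟨i, j'⟩) = Ssum x + Tsum i x := by
      intro j'
      have h := congrFun heig (Sum.inr ⟨i, j'⟩)
      rw [mulVec_inr] at h
      simp only [Pi.smul_apply, smul_eq_mul] at h
      linarith
    have hT : Tsum i x = nf i * x (Sum.inr ⟨i, j⟩) := by
      unfold Tsum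
      rw [Finset.sum_congr rfl (fun j' _ => by
        have := hconst j'
        have h2 := hconst j
        have : x (Sum.inr ⟨i, j'⟩) = x (Sum.inr ⟨i, j⟩) := by
          have hj' := hconst j'
          exact mul_left_cancel₀ (ne_of_gt hρ1) (hj'.trans h2.symm)
        exact this), Finset.sum_const, Finset.card_univ, Fintype.card_fin, nsmul_eq_mul]
    have h := hconst j
    rw [hT, hS] at h
    rw [eq_div_iff (ne_of_gt (hden i))]
    linarith
  have haane : aa ≠ 0 := by
    intro h0
    apply hx
    funext u
    cases u with
    | inl k => rw [hxl k, h0]; rfl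
    | inr a =>
      obtain ⟨i, j⟩ := a
      rw [hxr i j, h0]
      simp
  have hsum : (ρ + 1) * aa = s * aa + ∑ i, (nf i : ℝ) * (s * aa / (ρ + 1 - nf i)) := by
    have h1 : (∑ u, x u) = (ρ + 1) * aa := by
      rw [haa, mul_div_cancel₀ _ (ne_of_gt hρ1)]
    rw [← h1, sum_univ_eq, hS]
    congr 1
    apply Finset.sum_congr rfl
    intro i _
    unfold Tsum
    rw [Finset.sum_congr rfl (fun j _ => hxr i j), Finset.sum_const, Finset.card_univ,
      Fintype.card_fin, nsmul_eq_mul]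
  have key : (ρ + 1 - s) * aa = (s * ∑ i, (nf i : ℝ) / (ρ + 1 - nf i)) * aa := by
    rw [sub_mul, hsum, add_sub_cancel_left]
    have hterm : ∀ i : Fin t, (nf i : ℝ) * (s * aa / (ρ + 1 - nf i))
        = s * ((nf i : ℝ) / (ρ + 1 - nf i)) * aa := by
      intro i
      field_simp
    rw [Finset.sum_congr rfl (fun i _ => hterm i), ← Finset.sum_mul, ← Finset.mul_sum]
  exact mul_right_cancel₀ haane key

lemma specRad_lower (hs : 1 ≤ s) (hnf : ∀ i, 1 ≤ nf i) (i₀ : Fin t) :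
    (s : ℝ) + nf i₀ - 1 ≤ specRad (joinCliques s t nf) := by
  classical
  set G := joinCliques s t nf with hG
  set x : Fin s ⊕ (Σ i : Fin t, Fin (nf i)) → ℝ :=
    fun u => match u with
      | Sum.inl _ => 1
      | Sum.inr a => if a.1 = i₀ then 1 else 0 with hxdef
  have hx01 : ∀ u, x u = 0 ∨ x u = 1 := by
    intro u
    cases u with
    | inl k => right; rfl
    | inr a =>
      by_cases h : a.1 = i₀
      · right; simp [hxdef, h]
      · left; simp [hxdef, h]
  have hSx : Ssum x = s := by
    simp [Ssum, hxdef]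
  have hTx : ∀ i, Tsum i x = if i = i₀ then (nf i₀ : ℝ) else 0 := by
    intro i
    by_cases h : i = i₀
    · subst h
      simp [Tsum, hxdef]
    · simp [Tsum, hxdef, h]
  have hTot : ∑ u, x u = s + nf i₀ := by
    rw [sum_univ_eq, hSx, Finset.sum_congr rfl (fun i (_ : i ∈ Finset.univ) => hTx i),
      Finset.sum_ite_eq' Finset.univ i₀ (fun _ => (nf i₀ : ℝ))]
    simp
  set m : ℝ := s + nf i₀ with hm
  have hsq : ∀ u, x u * x u = x u := by
    intro u
    rcases hx01 u with h | h <;> rw [h] <;> ring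
  have hdotxx : x ⬝ᵥ x = m := by
    unfold dotProduct
    rw [Finset.sum_congr rfl (fun u _ => hsq u), hTot]
  have hpoint : ∀ u, x u * (G.adjMatrix ℝ *ᵥ x) u = (m - 1) * (x u * x u) := by
    intro u
    cases u with
    | inl k =>
      rw [mulVec_inl, hTot]
      show (1:ℝ) * _ = _ * (1 * 1)
      ring
    | inr a =>
      obtain ⟨i, j⟩ := a
      have hxv : x (Sum.inr ⟨i, j⟩) = if i = i₀ then (1:ℝ) else 0 := rfl
      rw [mulVec_inr, hSx, hTx, hxv]
      by_cases h : i = i₀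
      · subst h
        norm_num
        try rw [hm]
        try ring
        try linarith
      · simp only [if_neg h]
        ring
  have hdotAx : x ⬝ᵥ (G.adjMatrix ℝ *ᵥ x) = (m - 1) * m := by
    unfold dotProduct
    rw [Finset.sum_congr rfl (fun u _ => hpoint u), ← Finset.mul_sum,
      Finset.sum_congr rfl (fun u _ => hsq u), hTot]
  have hray := rayleigh_le (adjMatrix_isHermitian G) x
  rw [← specRad_eq G, hdotAx, hdotxx] at hray
  have hmpos : (0:ℝ) < m := by
    rw [hm]
    have h1 : (1:ℝ) ≤ (nf i₀ : ℝ) := by exact_mod_cast hnf i₀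
    have h2 : (1:ℝ) ≤ (s : ℝ) := by exact_mod_cast hs
    linarith
  have := (mul_le_mul_iff_left₀ hmpos).1 (by linarith [hray] : (m - 1) * m ≤ specRad G * m)
  rw [hm] at this
  linarith


end


lemma pair_exchange {R a b c d : ℝ} (hc0 : 0 ≤ c) (hca : c ≤ a) (hab : a ≤ b) (hbd : b ≤ d)
    (hdR : d < R) (hsum : a + b = c + d) :
    a / (R - a) + b / (R - b) ≤ c / (R - c) + d / (R - d) := by
  have hd : d = a + b - c := by linarith
  subst hd
  have pa : 0 < R - a := by linarith
  have pb : 0 < R - b := by linarith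
  have pc : 0 < R - c := by linarith
  have pd : 0 < R - (a + b - c) := by linarith
  rw [div_add_div _ _ (ne_of_gt pa) (ne_of_gt pb), div_add_div _ _ (ne_of_gt pc) (ne_of_gt pd),
    div_le_div_iff₀ (by positivity) (by positivity)]
  nlinarith [mul_nonneg (sub_nonneg.2 hca) (by linarith : (0:ℝ) ≤ b - c),
    mul_pos pa pb, mul_pos pc pd,
    mul_nonneg (mul_nonneg (sub_nonneg.2 hca) (by linarith : (0:ℝ) ≤ b - c))
      (by nlinarith : (0:ℝ) ≤ R * (2*R - a - b))]

lemma pair_exchange_strict {R a b c d : ℝ} (hc0 : 0 ≤ c) (hca : c < a) (hab : a ≤ b) (hbd : b ≤ d)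
    (hdR : d < R) (hsum : a + b = c + d) :
    a / (R - a) + b / (R - b) < c / (R - c) + d / (R - d) := by
  have hd : d = a + b - c := by linarith
  subst hd
  have pa : 0 < R - a := by linarith
  have pb : 0 < R - b := by linarith
  have pc : 0 < R - c := by linarith
  have pd : 0 < R - (a + b - c) := by linarith
  rw [div_add_div _ _ (ne_of_gt pa) (ne_of_gt pb), div_add_div _ _ (ne_of_gt pc) (ne_of_gt pd),
    div_lt_div_iff₀ (by positivity) (by positivity)]
  nlinarith [mul_pos (sub_pos.2 hca) (by linarith : (0:ℝ) < b - c),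
    mul_pos pa pb, mul_pos pc pd,
    mul_pos (mul_pos (sub_pos.2 hca) (by linarith : (0:ℝ) < b - c))
      (by nlinarith : (0:ℝ) < R * (2*R - a - b))]

noncomputable def hratio (R : ℝ) (n : ℕ) : ℝ := (n : ℝ) / (R - n)

lemma merge_fold {ι : Type*} [DecidableEq ι] {R : ℝ} (F : Finset ι) (v : ι → ℕ) (m B : ℕ)
    (h1 : ∀ i ∈ F, 1 ≤ v i) (hm : ∀ i ∈ F, v i ≤ m) (hm1 : 1 ≤ m)
    (hB : m + ∑ i ∈ F, (v i - 1) ≤ B) (hBR : (B : ℝ) < R) :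
    ∑ i ∈ F, hratio R (v i) + hratio R m
      ≤ F.card * hratio R 1 + hratio R (m + ∑ i ∈ F, (v i - 1)) := by
  classical
  induction F using Finset.cons_induction with
  | empty => simp
  | cons i F' hi IH =>
    rw [Finset.sum_cons, Finset.sum_cons, Finset.card_cons] at *
    have hB' : m + ∑ j ∈ F', (v j - 1) ≤ B := by omega
    have step1 := IH (fun j hj => h1 j (Finset.mem_cons.2 (Or.inr hj)))
      (fun j hj => hm j (Finset.mem_cons.2 (Or.inr hj))) hB'
    have hv1 : 1 ≤ v i := h1 i (Finset.mem_cons_self i F')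
    have hvm : v i ≤ m := hm i (Finset.mem_cons_self i F')
    set S' : ℕ := ∑ j ∈ F', (v j - 1) with hS'
    have hkey : hratio R (v i) + hratio R (m + S')
        ≤ hratio R 1 + hratio R (m + ((v i - 1) + S')) := by
      unfold hratio
      have e1 : ((m + ((v i - 1) + S') : ℕ) : ℝ) = m + S' + v i - 1 := by
        have : 1 ≤ v i := hv1
        push_cast [Nat.cast_sub this]
        ring
      rw [e1]
      push_cast
      apply pair_exchange (by norm_num) (by exact_mod_cast hv1)
        (by push_cast; have : (v i : ℝ) ≤ m := by exact_mod_cast hvm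
            have : (0:ℝ) ≤ (S' : ℝ) := by positivity
            linarith)
        (by push_cast
            have : (1:ℝ) ≤ (v i : ℝ) := by exact_mod_cast hv1
            linarith)
        (by have : ((m + ((v i - 1) + S') : ℕ) : ℝ) ≤ (B : ℝ) := by
              exact_mod_cast hB
            rw [e1] at this
            linarith)
        (by push_cast; ring)
    have hcast : ((F'.card + 1 : ℕ) : ℝ) = (F'.card : ℝ) + 1 := by push_cast; ring
    rw [hcast, add_assoc]
    calc hratio R (v i) + (∑ j ∈ F', hratio R (v j) + hratio R m)
        ≤ hratio R (v i) + (F'.card * hratio R 1 + hratio R (m + S')) := by linarith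
      _ ≤ hratio R 1 + hratio R (m + ((v i - 1) + S')) + F'.card * hratio R 1 := by linarith
      _ = ((F'.card : ℝ) + 1) * hratio R 1 + hratio R (m + ((v i - 1) + S')) := by ring
  -- alignment of sums done by rw at start

lemma merge_fold_strict {ι : Type*} [DecidableEq ι] {R : ℝ} (F : Finset ι) (v : ι → ℕ) (m B : ℕ)
    (h1 : ∀ i ∈ F, 1 ≤ v i) (hm : ∀ i ∈ F, v i ≤ m) (hm1 : 1 ≤ m)
    (hB : m + ∑ i ∈ F, (v i - 1) ≤ B) (hBR : (B : ℝ) < R)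
    {i₀ : ι} (hmem : i₀ ∈ F) (h2 : 2 ≤ v i₀) :
    ∑ i ∈ F, hratio R (v i) + hratio R m
      < F.card * hratio R 1 + hratio R (m + ∑ i ∈ F, (v i - 1)) := by
  classical
  have hFeq : F = insert i₀ (F.erase i₀) := (Finset.insert_erase hmem).symm
  set F' := F.erase i₀ with hF'
  set S' : ℕ := ∑ j ∈ F', (v j - 1) with hS'
  have hsum1 : ∑ i ∈ F, (v i - 1) = (v i₀ - 1) + S' := by
    rw [hFeq, Finset.sum_insert (Finset.notMem_erase i₀ F)]
  have hsum2 : ∑ i ∈ F, hratio R (v i) = hratio R (v i₀) + ∑ j ∈ F', hratio R (v j) := by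
    rw [hFeq, Finset.sum_insert (Finset.notMem_erase i₀ F)]
  have hcard : F.card = F'.card + 1 := by
    rw [hFeq, Finset.card_insert_of_notMem (Finset.notMem_erase i₀ F)]
  rw [hsum1, hsum2, hcard]
  rw [hsum1] at hB
  have hB' : m + S' ≤ B := by omega
  have step1 := merge_fold F' v m B (fun j hj => h1 j (Finset.mem_of_mem_erase hj))
    (fun j hj => hm j (Finset.mem_of_mem_erase hj)) hm1 hB' hBR
  have hvm : v i₀ ≤ m := hm i₀ hmem
  have hkey : hratio R (v i₀) + hratio R (m + S')
      < hratio R 1 + hratio R (m + ((v i₀ - 1) + S')) := by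
    unfold hratio
    have e1 : ((m + ((v i₀ - 1) + S') : ℕ) : ℝ) = m + S' + v i₀ - 1 := by
      push_cast [Nat.cast_sub (by omega : 1 ≤ v i₀)]
      ring
    rw [e1]
    push_cast
    apply pair_exchange_strict (by norm_num)
      (by exact_mod_cast (by omega : 1 < v i₀))
      (by have h3 : (v i₀ : ℝ) ≤ m := by exact_mod_cast hvm
          have h4 : (0:ℝ) ≤ (S' : ℝ) := by positivity
          push_cast; linarith)
      (by have h3 : (1:ℝ) ≤ (v i₀ : ℝ) := by exact_mod_cast (by omega : 1 ≤ v i₀)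
          push_cast; linarith)
      (by have h5 : ((m + ((v i₀ - 1) + S') : ℕ) : ℝ) ≤ (B : ℝ) := by
            exact_mod_cast (by omega : m + ((v i₀ - 1) + S') ≤ B)
          rw [e1] at h5; linarith)
      (by push_cast; ring)
  have hcast : ((F'.card + 1 : ℕ) : ℝ) = (F'.card : ℝ) + 1 := by push_cast; ring
  rw [hcast, add_assoc]
  calc hratio R (v i₀) + (∑ j ∈ F', hratio R (v j) + hratio R m)
      ≤ hratio R (v i₀) + (F'.card * hratio R 1 + hratio R (m + S')) := by linarith
    _ < hratio R 1 + hratio R (m + ((v i₀ - 1) + S')) + F'.card * hratio R 1 := by linarith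
    _ = ((F'.card : ℝ) + 1) * hratio R 1 + hratio R (m + ((v i₀ - 1) + S')) := by ring

lemma conv_ineq {R : ℝ} {t p N : ℕ} (nf : Fin t → ℕ) (i1 i2 : Fin t)
    (hi1 : (i1 : ℕ) = t - 1) (hi2 : (i2 : ℕ) = t - 2) (ht : 2 ≤ t) (hp : 1 ≤ p)
    (hpos : ∀ i, 1 ≤ nf i) (hmono : Monotone nf)
    (hp' : p ≤ nf i2) (hlt : nf i1 < N)
    (hsum : ∑ i, nf i = N + p + (t - 2)) (hNR : (N : ℝ) < R) :
    ∑ i, hratio R (nf i)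
      < hratio R N + hratio R p + ((t - 2 : ℕ) : ℝ) * hratio R 1 := by
  classical
  have hne : i1 ≠ i2 := by
    intro h
    rw [Fin.ext_iff, hi1, hi2] at h
    omega
  set F : Finset (Fin t) := Finset.univ \ {i1, i2} with hF
  have hsubset : ({i1, i2} : Finset (Fin t)) ⊆ Finset.univ := Finset.subset_univ _
  have hsplitR : ∀ f : Fin t → ℝ, ∑ i, f i = ∑ i ∈ F, f i + (f i1 + f i2) := by
    intro f
    rw [← Finset.sum_sdiff hsubset, Finset.sum_pair hne]
  have hsplitN : ∀ f : Fin t → ℕ, ∑ i, f i = ∑ i ∈ F, f i + (f i1 + f i2) := by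
    intro f
    rw [← Finset.sum_sdiff hsubset, Finset.sum_pair hne]
  have hcardF : F.card = t - 2 := by
    rw [hF, Finset.card_sdiff_of_subset hsubset, Finset.card_pair hne, Finset.card_univ, Fintype.card_fin]
  set m := nf i1 with hm
  set q := nf i2 with hq
  have hqm : q ≤ m := hmono (show i2 ≤ i1 by
    rw [Fin.le_def, hi1, hi2]; omega)
  have hFle : ∀ i ∈ F, nf i ≤ m := fun i _ => hmono (show i ≤ i1 by
    rw [Fin.le_def, hi1]
    have := i.isLt
    omega)
  have hF1 : ∀ i ∈ F, 1 ≤ nf i := fun i _ => hpos i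
  set SF : ℕ := ∑ i ∈ F, (nf i - 1) with hSF
  have hsumF : ∑ i ∈ F, nf i = SF + F.card := by
    have h0 : ∀ i ∈ F, nf i = (nf i - 1) + 1 := fun i _ => by have := hpos i; omega
    rw [Finset.sum_congr rfl h0, Finset.sum_add_distrib, hSF]
    simp
  have htot : SF + (t - 2) + (m + q) = N + p + (t - 2) := by
    have := hsplitN nf
    rw [hsumF, hcardF] at this
    omega
  set K : ℕ := m + SF with hK
  have hKq : K + q = N + p := by omega
  have hmN : m < N := hlt
  have hKN : K ≤ N := by omega
  have hpK : p + 1 ≤ K := by omega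
  have hm1 : 1 ≤ m := hpos i1
  -- step 2 (as a disjunction for strictness bookkeeping)
  have hp_le_q : p ≤ q := hp'
  have hNR' : ∀ x : ℕ, x ≤ N → (x : ℝ) < R := by
    intro x hx
    have : (x : ℝ) ≤ (N : ℝ) := by exact_mod_cast hx
    linarith
  have step2 : hratio R q + hratio R K ≤ hratio R p + hratio R N := by
    unfold hratio
    rcases le_total q K with hqK | hKq'
    · apply pair_exchange (by positivity) (by exact_mod_cast hp_le_q)
        (by exact_mod_cast hqK) (by exact_mod_cast hKN) (hNR' N le_rfl)
        (by exact_mod_cast (by omega : q + K = p + N))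
    · rw [add_comm ((q:ℝ)/(R-q)) _]
      apply pair_exchange (by positivity) (by exact_mod_cast (by omega : p ≤ K))
        (by exact_mod_cast hKq') (by exact_mod_cast (by omega : q ≤ N)) (hNR' N le_rfl)
        (by exact_mod_cast (by omega : K + q = p + N))
  have step2_strict : p < q → hratio R q + hratio R K < hratio R p + hratio R N := by
    intro hplt
    unfold hratio
    rcases le_total q K with hqK | hKq'
    · apply pair_exchange_strict (by positivity) (by exact_mod_cast hplt)
        (by exact_mod_cast hqK) (by exact_mod_cast hKN) (hNR' N le_rfl)
        (by exact_mod_cast (by omega : q + K = p + N))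
    · rw [add_comm ((q:ℝ)/(R-q)) _]
      apply pair_exchange_strict (by positivity) (by exact_mod_cast (by omega : p < K))
        (by exact_mod_cast hKq') (by exact_mod_cast (by omega : q ≤ N)) (hNR' N le_rfl)
        (by exact_mod_cast (by omega : K + q = p + N))
  -- step 1
  have hBR : (N : ℝ) < R := hNR
  rw [hsplitR (fun i => hratio R (nf i))]
  rcases Nat.lt_or_ge p q with hpq | hqp
  · -- strict in step 2
    have step1 := merge_fold F nf m N hF1 hFle hm1 (by omega) hBR
    have s2 := step2_strict hpq
    have hcardcast : ((F.card : ℕ) : ℝ) = ((t - 2 : ℕ) : ℝ) := by rw [hcardF]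
    calc ∑ i ∈ F, hratio R (nf i) + (hratio R m + hratio R q)
        ≤ (F.card * hratio R 1 + hratio R K) + hratio R q := by
          have := step1
          rw [← hK] at this
          linarith
      _ < F.card * hratio R 1 + (hratio R p + hratio R N) := by linarith
      _ = hratio R N + hratio R p + ((t - 2 : ℕ) : ℝ) * hratio R 1 := by
          rw [hcardcast]; ring
  · -- p = q, need strictness in step 1
    have hpq : p = q := by omega
    have hex : ∃ i ∈ F, 2 ≤ nf i := by
      by_contra hno
      push_neg at hno
      have hSF0 : SF = 0 := by
        rw [hSF]
        apply Finset.sum_eq_zero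
        intro i hi
        have := hno i hi
        have := hpos i
        omega
      omega
    obtain ⟨i₀, hi₀F, hi₀2⟩ := hex
    have step1 := merge_fold_strict F nf m N hF1 hFle hm1 (by omega) hBR hi₀F hi₀2
    have hcardcast : ((F.card : ℕ) : ℝ) = ((t - 2 : ℕ) : ℝ) := by rw [hcardF]
    calc ∑ i ∈ F, hratio R (nf i) + (hratio R m + hratio R q)
        < (F.card * hratio R 1 + hratio R K) + hratio R q := by
          have := step1
          rw [← hK] at this
          linarith
      _ ≤ F.card * hratio R 1 + (hratio R p + hratio R N) := by linarith
      _ = hratio R N + hratio R p + ((t - 2 : ℕ) : ℝ) * hratio R 1 := by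
          rw [hcardcast]; ring


/-- Lemma 2.2 -/
theorem stmt_14 (s t p n N : ℕ) (hs : 1 ≤ s) (ht : 2 ≤ t) (hp : 1 ≤ p)
    (nf : Fin t → ℕ) (hmono : Monotone nf) (hpos : ∀ i, 1 ≤ nf i)
    (hp' : p ≤ nf ⟨t - 2, by omega⟩)
    (hsum : s + ∑ i, nf i = n)
    (hN : s + t + p + N = n + 2)
    (hlt : nf ⟨t - 1, by omega⟩ < N) :
    specRad (joinCliques s t nf) <
      specRad (joinCliques s t
        (fun i => if (i : ℕ) = t - 1 then N else if (i : ℕ) = t - 2 then p else 1)) := by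
  classical
  set g : Fin t → ℕ := fun i => if (i : ℕ) = t - 1 then N else if (i : ℕ) = t - 2 then p else 1
    with hg
  haveI inst1 : DecidableRel (joinCliques s t nf).Adj := Classical.decRel _
  haveI inst2 : DecidableRel (joinCliques s t g).Adj := Classical.decRel _
  haveI : Nonempty (Fin s ⊕ Σ i : Fin t, Fin (nf i)) := ⟨inl ⟨0, hs⟩⟩
  haveI : Nonempty (Fin s ⊕ Σ i : Fin t, Fin (g i)) := ⟨inl ⟨0, hs⟩⟩
  have hi1lt : t - 1 < t := by omega
  have hi2lt : t - 2 < t := by omega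
  have hnfi1 : nf ⟨t - 1, hi1lt⟩ < N := hlt
  have hnfi2 : p ≤ nf ⟨t - 2, hi2lt⟩ := hp'
  have hne : (⟨t - 1, hi1lt⟩ : Fin t) ≠ ⟨t - 2, hi2lt⟩ := by
    intro h
    rw [Fin.ext_iff] at h
    simp only at h
    omega
  -- g values
  have hgi1 : g ⟨t - 1, hi1lt⟩ = N := by simp [hg]
  have hgi2 : g ⟨t - 2, hi2lt⟩ = p := by
    have h1 : ((⟨t - 2, hi2lt⟩ : Fin t) : ℕ) = t - 2 := rfl
    simp only [hg, h1]
    rw [if_neg (by omega : ¬ t - 2 = t - 1)]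
    simp
  have hgF : ∀ i : Fin t, (i : ℕ) ≠ t - 1 → (i : ℕ) ≠ t - 2 → g i = 1 := by
    intro i h1 h2
    simp only [hg]
    rw [if_neg h1, if_neg h2]
  have hmono12 : nf ⟨t - 2, hi2lt⟩ ≤ nf ⟨t - 1, hi1lt⟩ := hmono (by rw [Fin.mk_le_mk]; omega)
  have hpN : p ≤ N := by omega
  have hN2 : 2 ≤ N := by
    have h1 := hpos ⟨t - 1, hi1lt⟩
    omega
  have hgpos : ∀ i, 1 ≤ g i := by
    intro i
    simp only [hg]
    split
    · omega
    · split
      · omega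
      · omega
  have hgleN : ∀ i, g i ≤ N := by
    intro i
    simp only [hg]
    have hnn : nf ⟨t - 2, hi2lt⟩ ≤ nf ⟨t - 1, hi1lt⟩ := hmono (by rw [Fin.mk_le_mk]; omega)
    split
    · omega
    · split
      · omega
      · omega
  -- spectral radii and their lower bounds
  set ρ := specRad (joinCliques s t nf) with hρdef
  set ρ' := specRad (joinCliques s t g) with hρ'def
  have hρlow : ∀ i, (s : ℝ) + nf i - 1 ≤ ρ := fun i => specRad_lower hs hpos i
  have hρ'low : ∀ i, (s : ℝ) + g i - 1 ≤ ρ' := fun i => specRad_lower hs hgpos i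
  have hs1 : (1 : ℝ) ≤ (s : ℝ) := by exact_mod_cast hs
  -- key equations
  obtain ⟨x, hx0, hxe⟩ := exists_eigvec (adjMatrix_isHermitian (joinCliques s t nf))
  rw [← specRad_eq] at hxe
  have keyE : ρ + 1 - s = s * ∑ i, (nf i : ℝ) / (ρ + 1 - nf i) :=
    key_equation hs (by omega) hpos hρlow x hx0 hxe
  obtain ⟨y, hy0, hye⟩ := exists_eigvec (adjMatrix_isHermitian (joinCliques s t g))
  rw [← specRad_eq] at hye
  have keyE' : ρ' + 1 - s = s * ∑ i, (g i : ℝ) / (ρ' + 1 - g i) :=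
    key_equation hs (by omega) hgpos hρ'low y hy0 hye
  -- sum-splitting helper
  have hsubset : ({(⟨t - 1, hi1lt⟩ : Fin t), ⟨t - 2, hi2lt⟩} : Finset (Fin t)) ⊆ Finset.univ :=
    Finset.subset_univ _
  set F : Finset (Fin t) := Finset.univ \ {(⟨t - 1, hi1lt⟩ : Fin t), ⟨t - 2, hi2lt⟩} with hF
  have hsplitR : ∀ f : Fin t → ℝ,
      ∑ i, f i = ∑ i ∈ F, f i + (f ⟨t - 1, hi1lt⟩ + f ⟨t - 2, hi2lt⟩) := by
    intro f
    rw [hF, ← Finset.sum_sdiff hsubset, Finset.sum_pair hne]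
  have hFmem : ∀ i ∈ F, (i : ℕ) ≠ t - 1 ∧ (i : ℕ) ≠ t - 2 := by
    intro i hi
    rw [hF, Finset.mem_sdiff, Finset.mem_insert, Finset.mem_singleton] at hi
    constructor
    · intro h
      exact hi.2 (Or.inl (Fin.ext h))
    · intro h
      exact hi.2 (Or.inr (Fin.ext h))
  have hcardF : F.card = t - 2 := by
    rw [hF, Finset.card_sdiff_of_subset hsubset, Finset.card_pair hne, Finset.card_univ, Fintype.card_fin]
  -- Step A : s + N - 1 < ρ'
  have hρ'N : (s : ℝ) + N - 1 ≤ ρ' := by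
    have := hρ'low ⟨t - 1, hi1lt⟩
    rwa [hgi1] at this
  have hA : (s : ℝ) + N - 1 < ρ' := by
    rcases lt_or_eq_of_le hρ'N with h | h
    · exact h
    · exfalso
      -- ρ' = s + N - 1
      have hsplit := hsplitR (fun i => (g i : ℝ) / (ρ' + 1 - g i))
      have hterm1 : ((g ⟨t - 1, hi1lt⟩ : ℕ) : ℝ) / (ρ' + 1 - g ⟨t - 1, hi1lt⟩) = N / s := by
        rw [hgi1, ← h]
        congr 1
        ring
      have hterm2 : ((g ⟨t - 2, hi2lt⟩ : ℕ) : ℝ) / (ρ' + 1 - g ⟨t - 2, hi2lt⟩) > 0 := by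
        rw [hgi2, ← h]
        apply div_pos
        · exact_mod_cast hp
        · have hpN' : (p : ℝ) ≤ (N : ℝ) := by exact_mod_cast hpN
          linarith
      have htermF : ∀ i ∈ F, (0 : ℝ) ≤ (g i : ℝ) / (ρ' + 1 - g i) := by
        intro i hi
        apply div_nonneg (by positivity)
        have hgle : (g i : ℝ) ≤ (N : ℝ) := by exact_mod_cast hgleN i
        linarith
      have hge : ∑ i, (g i : ℝ) / (ρ' + 1 - g i) > (N : ℝ) / s := by
        rw [hsplit, hterm1]
        have hFnn : (0:ℝ) ≤ ∑ i ∈ F, (g i : ℝ) / (ρ' + 1 - g i) :=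
          Finset.sum_nonneg htermF
        linarith
      have hN' : ρ' + 1 - s = (N : ℝ) := by rw [← h]; ring
      rw [hN'] at keyE'
      have hspos : (0:ℝ) < s := by linarith
      have : (N : ℝ) > s * ((N : ℝ) / s) := by
        calc (N:ℝ) = s * ∑ i, (g i : ℝ) / (ρ' + 1 - g i) := keyE'
          _ > s * ((N : ℝ) / s) := by
            apply (mul_lt_mul_iff_right₀ hspos).2 hge
      rw [mul_div_cancel₀ _ (ne_of_gt hspos)] at this
      exact lt_irrefl _ this
  -- main case split
  by_cases hcase : ρ ≤ (s : ℝ) + N - 1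
  · exact lt_of_le_of_lt hcase hA
  push_neg at hcase
  -- ρ > s + N - 1 : show Φ(ρ) < 0 and monotonicity
  have hNρ : (N : ℝ) < ρ + 1 := by linarith
  have hconv : ∑ i, hratio (ρ + 1) (nf i)
      < hratio (ρ + 1) N + hratio (ρ + 1) p + ((t - 2 : ℕ) : ℝ) * hratio (ρ + 1) 1 :=
    conv_ineq nf ⟨t - 1, hi1lt⟩ ⟨t - 2, hi2lt⟩ rfl rfl ht hp hpos hmono hp' hlt
      (by omega) hNρ
  -- bridge : ∑ g-ratios at ρ equals RHS of hconv
  have hbridge : ∀ μ : ℝ, ((s:ℝ) + N - 1 ≤ μ) →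
      ∑ i, (g i : ℝ) / (μ + 1 - g i)
        = hratio (μ + 1) N + hratio (μ + 1) p + ((t - 2 : ℕ) : ℝ) * hratio (μ + 1) 1 := by
    intro μ hμ
    have hsplit := hsplitR (fun i => (g i : ℝ) / (μ + 1 - g i))
    rw [hsplit, hgi1, hgi2]
    have hFones : ∀ i ∈ F, (g i : ℝ) / (μ + 1 - g i) = hratio (μ + 1) 1 := by
      intro i hi
      obtain ⟨h1, h2⟩ := hFmem i hi
      rw [hgF i h1 h2]
      rfl
    rw [Finset.sum_congr rfl hFones, Finset.sum_const, hcardF, nsmul_eq_mul]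
    unfold hratio
    ring
  have hΦρ : ρ + 1 - s < s * ∑ i, (g i : ℝ) / (ρ + 1 - g i) := by
    rw [keyE, hbridge ρ (le_of_lt hcase)]
    apply (mul_lt_mul_iff_right₀ (by linarith : (0:ℝ) < (s:ℝ))).2
    have : ∑ i, (nf i : ℝ) / (ρ + 1 - nf i) = ∑ i, hratio (ρ + 1) (nf i) := by
      apply Finset.sum_congr rfl
      intro i _
      rfl
    rw [this]
    exact hconv
  -- conclude by monotonicity
  by_contra hcon
  push_neg at hcon   -- ρ' ≤ ρ
  have hterm : ∀ i : Fin t, (g i : ℝ) / (ρ + 1 - g i) ≤ (g i : ℝ) / (ρ' + 1 - g i) := by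
    intro i
    apply div_le_div_of_nonneg_left (by positivity)
    · have : (g i : ℝ) ≤ (N : ℝ) := by exact_mod_cast hgleN i
      linarith
    · linarith
  have : s * ∑ i, (g i : ℝ) / (ρ + 1 - g i) ≤ s * ∑ i, (g i : ℝ) / (ρ' + 1 - g i) := by
    apply mul_le_mul_of_nonneg_left (Finset.sum_le_sum fun i _ => hterm i) (by linarith)
  rw [← keyE'] at this
  linarith
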